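/- arXiv:1802.03126 — 3 statements merged into one kernel-verified Lean document; each statement's English description precedes it below -/
import Mathlib

section
/- Let A be an m×n real matrix whose rows a_1^T,...,a_m^T all have unit Euclidean norm, let b ∈ ℝ^m, let x ∈ ℝ^n be any fixed vector, and set e = Ax − b. Let x_k ∈ ℝ^n, let i be an index maximizing (a_i^T x_k − b_i)^2 over all rows, and define x_{k+1} = x_k + (b_i − a_i^T x_k) a_i. Then, without any further assumption, ‖x_{k+1} − x‖² ≤ ‖x_k − x‖² − ‖Ax_k − b‖_∞² + 2‖Ax_k − b‖_∞ ‖e‖_∞. -/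
/-! A Kaczmarz step projects `xk` onto the hyperplane `⟪a, ·⟫ = β` of a unit row `a`; expanding the
square gives the exact identity
`‖xk₊ - x‖² = ‖xk - x‖² - r² + 2 r s`, with residuals `r = ⟪a, xk⟫ - β` and `s = ⟪a, x⟫ - β`.
Motzkin's rule makes `|r|` the sup norm of `A xk - b`, and `r s ≤ |r| ‖e‖_∞`. -/

open Matrix

lemma sum_sq_add_smul {ι : Type*} [Fintype ι] (y a : ι → ℝ) (t : ℝ) :
    ∑ j, (y + t • a) j ^ 2 = ∑ j, y j ^ 2 + 2 * t * (a ⬝ᵥ y) + t ^ 2 * ∑ j, a j ^ 2 := by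
  simp only [Pi.add_apply, Pi.smul_apply, smul_eq_mul, dotProduct, Finset.mul_sum,
    ← Finset.sum_add_distrib]
  exact Finset.sum_congr rfl fun j _ => by ring

lemma sum_sq_sub_kaczmarz_step {ι : Type*} [Fintype ι] (a y z : ι → ℝ) (β : ℝ)
    (ha : ∑ j, a j ^ 2 = 1) :
    ∑ j, ((y + (β - a ⬝ᵥ y) • a) j - z j) ^ 2 =
      ∑ j, (y j - z j) ^ 2 - (a ⬝ᵥ y - β) ^ 2 + 2 * (a ⬝ᵥ y - β) * (a ⬝ᵥ z - β) := by
  have hshift : y + (β - a ⬝ᵥ y) • a - z = (y - z) + (β - a ⬝ᵥ y) • a := by abel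
  have h := sum_sq_add_smul (y - z) a (β - a ⬝ᵥ y)
  rw [← hshift, ha, dotProduct_sub] at h
  simp only [Pi.sub_apply] at h
  rw [h]
  ring

lemma pi_norm_eq_abs_of_forall_sq_le {ι : Type*} [Fintype ι] {v : ι → ℝ} {i : ι}
    (hi : ∀ j, v j ^ 2 ≤ v i ^ 2) : ‖v‖ = |v i| := by
  refine le_antisymm ((pi_norm_le_iff_of_nonneg (abs_nonneg _)).2 fun j => ?_) ?_
  · rw [Real.norm_eq_abs]
    exact sq_le_sq.1 (hi j)
  · simpa only [Real.norm_eq_abs] using norm_le_pi_norm v i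

/-- **One-step Motzkin estimate without any residual assumption.**
`A` is an `m × n` real matrix whose rows `a i = A i` all have unit Euclidean norm,
`b ∈ ℝ^m`, `x ∈ ℝ^n` is any fixed vector and `e = A x - b`.  The `‖·‖` on `Fin m → ℝ`
is the sup (max) norm, while Euclidean norms on `ℝ^n` appear squared as sums of squares.
If `xk1` is the Motzkin iterate obtained from `xk` by projecting onto a most violated
constraint `i`, then
`‖xk1 - x‖² ≤ ‖xk - x‖² - ‖A xk - b‖_∞² + 2 ‖A xk - b‖_∞ ‖e‖_∞`. -/
theorem motzkin_one_step_estimate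
    {m n : ℕ} (A : Matrix (Fin m) (Fin n) ℝ) (b : Fin m → ℝ)
    (x xk xk1 : Fin n → ℝ) (e : Fin m → ℝ)
    (hrows : ∀ i : Fin m, ∑ j, (A i j) ^ 2 = 1)
    (he : e = A.mulVec x - b)
    (i : Fin m)
    (hi : ∀ j : Fin m, (A.mulVec xk j - b j) ^ 2 ≤ (A.mulVec xk i - b i) ^ 2)
    (hupdate : xk1 = xk + (b i - A.mulVec xk i) • A i) :
    ∑ j, (xk1 j - x j) ^ 2 ≤
      ∑ j, (xk j - x j) ^ 2 - ‖A.mulVec xk - b‖ ^ 2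
        + 2 * ‖A.mulVec xk - b‖ * ‖e‖ := by
  set r := A *ᵥ xk - b
  have hres : ‖r‖ = |r i| := pi_norm_eq_abs_of_forall_sq_le hi
  have hstep : ∑ j, (xk1 j - x j) ^ 2 = ∑ j, (xk j - x j) ^ 2 - r i ^ 2 + 2 * r i * e i := by
    subst he hupdate
    exact sum_sq_sub_kaczmarz_step (A i) xk x (b i) (hrows i)
  have hcross : r i * e i ≤ |r i| * ‖e‖ :=
    calc r i * e i ≤ |r i| * |e i| := by rw [← abs_mul]; exact le_abs_self _
      _ ≤ |r i| * ‖e‖ := by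
        gcongr
        simpa only [Real.norm_eq_abs] using norm_le_pi_norm e i
  rw [hstep, hres, sq_abs]
  linarith
end

section
/- Let A be an m×n real matrix with full column rank n and rows of unit Euclidean norm, let b ∈ ℝ^m, let x ∈ ℝ^n be fixed, and set e = Ax − b. Let x_0, x_1, ..., x_K be iterates of Motzkin's method started at an arbitrary x_0, and suppose that for every k with 0 ≤ k ≤ K−1 the iterate satisfies ‖Ax_k − b‖_∞ > 4‖e‖_∞ and A x_k ≠ A x. With γ_k = ‖A(x_k − x)‖²/‖A(x_k − x)‖_∞², it holds that ‖x_K − x‖² ≤ (∏_{k=0}^{K−1} (1 − σ_min(A)²/(4γ_k))) ‖x_0 − x‖² + 2 m σ_min(A)^{−2} ‖e‖_∞². -/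
/-!
Write `w = A (x_k - x)`, so that the residual is `A x_k - b = w + e`. The Motzkin step projects
onto the hyperplane of the greedy row `i`, which lowers `‖x_k - x‖²` by exactly `w_i² - e_i²`.
Because `i` maximises `|w_j + e_j|` and this maximum exceeds `4 ‖e‖_∞`, one gets
`w_i² - e_i² ≥ ‖w‖_∞² / 4 = ‖w‖² / (4 γ_k) ≥ σ² ‖x_k - x‖² / (4 γ_k)`,
so each step contracts `‖x_k - x‖²` by the factor `1 - σ² / (4 γ_k)`.
-/

open Finset Matrix

theorem le_prod_mul_of_le_mul {R : Type*} [CommSemiring R] [PartialOrder R] [IsOrderedRing R]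
    {d q : ℕ → R} {K : ℕ} (hq : ∀ k < K, 0 ≤ q k) (hd : ∀ k < K, d (k + 1) ≤ q k * d k) :
    d K ≤ (∏ k ∈ range K, q k) * d 0 := by
  induction K with
  | zero => simp
  | succ K ih =>
    calc d (K + 1) ≤ q K * d K := hd K K.lt_succ_self
      _ ≤ q K * ((∏ k ∈ range K, q k) * d 0) :=
        mul_le_mul_of_nonneg_left (ih (fun k hk => hq k (by omega)) fun k hk => hd k (by omega))
          (hq K K.lt_succ_self)
      _ = (∏ k ∈ range (K + 1), q k) * d 0 := by rw [prod_range_succ]; ring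

section

variable {ι : Type*} [Fintype ι]

theorem sum_sq_pos_of_ne_zero {v : ι → ℝ} (hv : v ≠ 0) : 0 < ∑ i, v i ^ 2 := by
  obtain ⟨i, hi⟩ := Function.ne_iff.mp hv
  exact sum_pos' (fun _ _ => sq_nonneg _) ⟨i, mem_univ i, pow_two_pos_of_ne_zero hi⟩

-- Pythagoras for the projection onto the hyperplane `a ⬝ᵥ z = β`, at squared distance
-- `(a ⬝ᵥ x - β)²` from `x`.
theorem sum_sq_sub_kaczmarz_update {a y x : ι → ℝ} (β : ℝ) (ha : ∑ j, a j ^ 2 = 1) :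
    ∑ j, ((y + (β - a ⬝ᵥ y) • a) j - x j) ^ 2 =
      ∑ j, (y j - x j) ^ 2 - (a ⬝ᵥ (y - x)) ^ 2 + (a ⬝ᵥ x - β) ^ 2 := by
  have hay : a ⬝ᵥ y = a ⬝ᵥ (y - x) + a ⬝ᵥ x := by rw [dotProduct_sub]; ring
  have hexpand : ∀ c : ℝ, ∑ j, ((y + c • a) j - x j) ^ 2 =
      ∑ j, (y j - x j) ^ 2 + 2 * c * (a ⬝ᵥ (y - x)) + c ^ 2 * ∑ j, a j ^ 2 := by
    intro c
    simp only [dotProduct, Pi.add_apply, Pi.smul_apply, Pi.sub_apply, smul_eq_mul, mul_sum,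
      ← sum_add_distrib]
    exact sum_congr rfl fun j _ => by ring
  rw [hexpand, ha, hay]
  ring

theorem sq_norm_le_four_mul_sq_sub_sq {w e : ι → ℝ} {i : ι} (hi : ‖w + e‖ ≤ |(w + e) i|)
    (he : 4 * ‖e‖ < ‖w + e‖) : ‖w‖ ^ 2 ≤ 4 * (w i ^ 2 - e i ^ 2) := by
  have hei : |e i| ≤ ‖e‖ := norm_le_pi_norm e i
  have hwi : ‖w + e‖ - ‖e‖ ≤ |w i| := by
    have := abs_add_le (w i) (e i)
    rw [Pi.add_apply] at hi
    linarith
  have hw : ‖w‖ ≤ ‖w + e‖ + ‖e‖ := by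
    simpa using norm_sub_le (w + e) e
  have hwi2 : (‖w + e‖ - ‖e‖) ^ 2 ≤ w i ^ 2 := by
    rw [← sq_abs (w i)]; exact pow_le_pow_left₀ (by linarith [norm_nonneg e]) hwi 2
  have hei2 : e i ^ 2 ≤ ‖e‖ ^ 2 := by
    rw [← sq_abs (e i)]; exact pow_le_pow_left₀ (abs_nonneg _) hei 2
  have hw2 : ‖w‖ ^ 2 ≤ (‖w + e‖ + ‖e‖) ^ 2 := pow_le_pow_left₀ (norm_nonneg w) hw 2
  -- with `M = ‖w + e‖`, `E = ‖e‖`: `(M + E)² ≤ 4 ((M - E)² - E²)` as soon as `M ≥ 4 E`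
  nlinarith [norm_nonneg e]

-- `‖·‖` is the sup norm on `ι → ℝ`, so this is `‖v‖₂² / ‖v‖_∞²`.
noncomputable def dynamicRange (v : ι → ℝ) : ℝ := (∑ i, v i ^ 2) / ‖v‖ ^ 2

theorem div_dynamicRange_le {v : ι → ℝ} (hv : v ≠ 0) {c : ℝ} (hc : c ≤ ∑ i, v i ^ 2) :
    c / dynamicRange v ≤ ‖v‖ ^ 2 := by
  rw [dynamicRange, div_div_eq_mul_div, div_le_iff₀ (sum_sq_pos_of_ne_zero hv), mul_comm]
  exact mul_le_mul_of_nonneg_left hc (sq_nonneg _)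

end

theorem motzkin_step_contraction {ι κ : Type*} [Fintype ι] [Fintype κ] {A : Matrix κ ι ℝ}
    (hrows : ∀ i, ∑ j, A i j ^ 2 = 1) {σ : ℝ}
    (hσmin : ∀ v : ι → ℝ, σ ^ 2 * ∑ j, v j ^ 2 ≤ ∑ i, (A *ᵥ v) i ^ 2)
    {b : κ → ℝ} {x y : ι → ℝ} {i : κ}
    (hmax : ∀ j, ((A *ᵥ y) j - b j) ^ 2 ≤ ((A *ᵥ y) i - b i) ^ 2)
    (hres : 4 * ‖A *ᵥ x - b‖ < ‖A *ᵥ y - b‖) (hne : A *ᵥ y ≠ A *ᵥ x) :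
    0 ≤ 1 - σ ^ 2 / (4 * dynamicRange (A *ᵥ (y - x))) ∧
      ∑ j, ((y + (b i - (A *ᵥ y) i) • A i) j - x j) ^ 2 ≤
        (1 - σ ^ 2 / (4 * dynamicRange (A *ᵥ (y - x)))) * ∑ j, (y j - x j) ^ 2 := by
  set w := A *ᵥ (y - x)
  set e := A *ᵥ x - b
  set D := ∑ j, (y j - x j) ^ 2
  have hresidual : A *ᵥ y - b = w + e := by simp only [w, e, mulVec_sub]; abel
  have hw : w ≠ 0 := by simp only [w, mulVec_sub]; exact sub_ne_zero.mpr hne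
  have hgreedy : ‖w‖ ^ 2 ≤ 4 * (w i ^ 2 - e i ^ 2) := by
    refine sq_norm_le_four_mul_sq_sub_sq ?_ (hresidual ▸ hres)
    rw [← hresidual]
    refine (pi_norm_le_iff_of_nonneg (abs_nonneg _)).2 fun j => ?_
    rw [Real.norm_eq_abs, ← sq_le_sq]
    exact hmax j
  have hσw : σ ^ 2 * D / dynamicRange w ≤ ‖w‖ ^ 2 := div_dynamicRange_le hw (hσmin (y - x))
  have hstep : ∑ j, ((y + (b i - (A *ᵥ y) i) • A i) j - x j) ^ 2 ≤
      (1 - σ ^ 2 / (4 * dynamicRange w)) * D := by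
    calc _ = D - w i ^ 2 + e i ^ 2 := sum_sq_sub_kaczmarz_update (b i) (hrows i)
      _ ≤ D - σ ^ 2 * D / dynamicRange w / 4 := by linarith
      _ = _ := by ring
  have hD : 0 < D := sum_sq_pos_of_ne_zero (v := y - x) fun h => hne (by rw [sub_eq_zero.mp h])
  exact ⟨nonneg_of_mul_nonneg_left ((sum_nonneg fun _ _ => sq_nonneg _).trans hstep) hD, hstep⟩

theorem motzkin_accelerated_convergence_general
    {m n : ℕ} (A : Matrix (Fin m) (Fin n) ℝ)
    (hrows : ∀ i : Fin m, ∑ j, (A i j) ^ 2 = 1)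
    (σ : ℝ)
    (hσmin : ∀ v : Fin n → ℝ, σ ^ 2 * ∑ j, (v j) ^ 2 ≤ ∑ i, (A.mulVec v i) ^ 2)
    (b : Fin m → ℝ) (x : Fin n → ℝ) (e : Fin m → ℝ)
    (he : e = A.mulVec x - b)
    (K : ℕ) (xs : ℕ → Fin n → ℝ)
    (hiter : ∀ k < K, ∃ i : Fin m,
      (∀ j : Fin m, (A.mulVec (xs k) j - b j) ^ 2 ≤ (A.mulVec (xs k) i - b i) ^ 2) ∧
      xs (k + 1) = xs k + (b i - A.mulVec (xs k) i) • A i)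
    (hres : ∀ k < K, 4 * ‖e‖ < ‖A.mulVec (xs k) - b‖)
    (hne : ∀ k < K, A.mulVec (xs k) ≠ A.mulVec x)
    (γ : ℕ → ℝ)
    (hγ : ∀ k, γ k = (∑ i, (A.mulVec (xs k - x) i) ^ 2) / ‖A.mulVec (xs k - x)‖ ^ 2) :
    ∑ j, (xs K j - x j) ^ 2 ≤
      (∏ k ∈ Finset.range K, (1 - σ ^ 2 / (4 * γ k))) * ∑ j, (xs 0 j - x j) ^ 2
        + 2 * m * (σ ^ 2)⁻¹ * ‖e‖ ^ 2 := by
  subst he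
  have hstep : ∀ k < K, 0 ≤ 1 - σ ^ 2 / (4 * γ k) ∧
      ∑ j, (xs (k + 1) j - x j) ^ 2 ≤ (1 - σ ^ 2 / (4 * γ k)) * ∑ j, (xs k j - x j) ^ 2 := by
    intro k hk
    obtain ⟨i, hmax, hnext⟩ := hiter k hk
    rw [hnext, hγ k]
    exact motzkin_step_contraction hrows hσmin hmax (hres k hk) (hne k hk)
  calc _ ≤ (∏ k ∈ range K, (1 - σ ^ 2 / (4 * γ k))) * ∑ j, (xs 0 j - x j) ^ 2 :=
        le_prod_mul_of_le_mul (d := fun k => ∑ j, (xs k j - x j) ^ 2)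
          (fun k hk => (hstep k hk).1) fun k hk => (hstep k hk).2
    _ ≤ _ := le_add_of_nonneg_right (by positivity)

/-- **Accelerated convergence rate (inequality (4) of Corollary 1).**
`A` is an `m × n` real matrix (`m ≥ n`) with full column rank `n` and rows of unit
Euclidean norm; `σ` denotes its smallest singular value, which is positive and
satisfies `σ ‖v‖ ≤ ‖A v‖` for all `v` (stated with squared Euclidean norms).
`b ∈ ℝ^m`, `x ∈ ℝ^n` is fixed, `e = A x - b`, and `‖·‖` on `Fin m → ℝ` is the sup
(max) norm.  `xs 0, xs 1, …, xs K` are Motzkin iterates started at an arbitrary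
`xs 0`, and for every `k < K` we have `‖A (xs k) - b‖_∞ > 4 ‖e‖_∞` and
`A (xs k) ≠ A x`.  With the dynamic ranges
`γ k = ‖A (xs k - x)‖² / ‖A (xs k - x)‖_∞²`, the final iterate satisfies
`‖xs K - x‖² ≤ (∏_{k<K} (1 - σ²/(4 γ k))) ‖xs 0 - x‖² + 2 m σ⁻² ‖e‖_∞²`.
(An empty product equals one.) -/
theorem motzkin_accelerated_convergence
    {m n : ℕ} (hmn : n ≤ m) (A : Matrix (Fin m) (Fin n) ℝ)
    (hrank : A.rank = n)
    (hrows : ∀ i : Fin m, ∑ j, (A i j) ^ 2 = 1)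
    (σ : ℝ) (hσ : 0 < σ)
    (hσmin : ∀ v : Fin n → ℝ, σ ^ 2 * ∑ j, (v j) ^ 2 ≤ ∑ i, (A.mulVec v i) ^ 2)
    (b : Fin m → ℝ) (x : Fin n → ℝ) (e : Fin m → ℝ)
    (he : e = A.mulVec x - b)
    (K : ℕ) (xs : ℕ → Fin n → ℝ)
    (hiter : ∀ k < K, ∃ i : Fin m,
      (∀ j : Fin m, (A.mulVec (xs k) j - b j) ^ 2 ≤ (A.mulVec (xs k) i - b i) ^ 2) ∧
      xs (k + 1) = xs k + (b i - A.mulVec (xs k) i) • A i)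
    (hres : ∀ k < K, 4 * ‖e‖ < ‖A.mulVec (xs k) - b‖)
    (hne : ∀ k < K, A.mulVec (xs k) ≠ A.mulVec x)
    (γ : ℕ → ℝ)
    (hγ : ∀ k, γ k = (∑ i, (A.mulVec (xs k - x) i) ^ 2) / ‖A.mulVec (xs k - x)‖ ^ 2) :
    ∑ j, (xs K j - x j) ^ 2 ≤
      (∏ k ∈ Finset.range K, (1 - σ ^ 2 / (4 * γ k))) * ∑ j, (xs 0 j - x j) ^ 2
        + 2 * m * (σ ^ 2)⁻¹ * ‖e‖ ^ 2 :=
  motzkin_accelerated_convergence_general A hrows σ hσmin b x e he K xs hiter hres hne γ hγ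
end

section
/- Let A be an m×n real matrix with full column rank n and rows of unit Euclidean norm, let b ∈ ℝ^m, let x ∈ ℝ^n be fixed, and set e = Ax − b. Let x_0, x_1, ..., x_K be iterates of Motzkin's method started at an arbitrary x_0, and suppose that for every k with 0 ≤ k ≤ K−1 the iterate satisfies ‖Ax_k − b‖_∞ > 4‖e‖_∞ and A x_k ≠ A x. Then ‖x_K − x‖² ≤ (1 − σ_min(A)²/(4m))^K ‖x_0 − x‖² + 2 m σ_min(A)^{−2} ‖e‖_∞². -/
/-!
Write `s_k = ‖x_k - x‖²`, `r = A x_k - b` and let `i` be the row chosen by Motzkin's rule, so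
`|r_i| = ‖r‖_∞ > 4 ‖e‖_∞`. The step is an orthogonal projection onto a hyperplane
passing at distance `|e_i|` from `x`, which gives `s_{k+1} = s_k - r_i² + 2 r_i e_i ≤ s_k - r_i² / 2`.
On the other hand `σ² s_k ≤ ‖A (x_k - x)‖² = ‖r - e‖² ≤ 2 m (r_i² + ‖e‖_∞²)`, so
`s_{k+1} ≤ (1 - σ² / (4 m)) s_k + ‖e‖_∞² / 2`, and unrolling this recursion gives the bound.
-/
open Finset Matrix

lemma two_mul_mul_le_sq_div_two_of_four_mul_abs_le {r s : ℝ} (h : 4 * |s| ≤ |r|) :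
    2 * r * s ≤ r ^ 2 / 2 := by
  have hrs : r * s ≤ |r| * |s| := (le_abs_self _).trans (abs_mul r s).le
  nlinarith [abs_nonneg r, abs_nonneg s, sq_abs r]

section SupNorm

variable {ι : Type*} [Fintype ι]

lemma sum_sq_le_card_mul_norm_sq (v : ι → ℝ) :
    ∑ i, v i ^ 2 ≤ Fintype.card ι * ‖v‖ ^ 2 := by
  calc ∑ i, v i ^ 2 ≤ ∑ _i : ι, ‖v‖ ^ 2 := by
        refine sum_le_sum fun i _ => ?_
        rw [← sq_abs, ← Real.norm_eq_abs]
        exact pow_le_pow_left₀ (norm_nonneg _) (norm_le_pi_norm v i) 2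
    _ = Fintype.card ι * ‖v‖ ^ 2 := by simp

lemma norm_eq_abs_of_forall_sq_le {v : ι → ℝ} {i : ι} (h : ∀ j, v j ^ 2 ≤ v i ^ 2) :
    ‖v‖ = |v i| := by
  refine le_antisymm ((pi_norm_le_iff_of_nonneg (abs_nonneg _)).2 fun j => ?_) ?_
  · rw [Real.norm_eq_abs]
    exact sq_le_sq.1 (h j)
  · simpa only [Real.norm_eq_abs] using norm_le_pi_norm v i

end SupNorm

section UnitRows

variable {ι κ : Type*} [Fintype ι] [Fintype κ] {A : Matrix ι κ ℝ}

lemma sum_sq_mulVec_le_card_mul (hrows : ∀ i, ∑ j, A i j ^ 2 = 1) (v : κ → ℝ) :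
    ∑ i, (A *ᵥ v) i ^ 2 ≤ Fintype.card ι * ∑ j, v j ^ 2 := by
  calc ∑ i, (A *ᵥ v) i ^ 2 ≤ ∑ _i : ι, ∑ j, v j ^ 2 := by
        refine sum_le_sum fun i _ => ?_
        simpa only [mulVec, dotProduct, hrows i, one_mul] using
          sum_mul_sq_le_sq_mul_sq univ (A i) v
    _ = Fintype.card ι * ∑ j, v j ^ 2 := by simp

lemma sq_le_card_of_sq_mul_le [Nonempty κ] (hrows : ∀ i, ∑ j, A i j ^ 2 = 1) {σ : ℝ}
    (hσ : ∀ v : κ → ℝ, σ ^ 2 * ∑ j, v j ^ 2 ≤ ∑ i, (A *ᵥ v) i ^ 2) :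
    σ ^ 2 ≤ Fintype.card ι := by
  have hpos : 0 < ∑ _j : κ, (1 : ℝ) ^ 2 := by simp [Fintype.card_pos]
  exact le_of_mul_le_mul_right ((hσ _).trans (sum_sq_mulVec_le_card_mul hrows _)) hpos

end UnitRows

section MotzkinStep

variable {ι κ : Type*} [Fintype κ] {A : Matrix ι κ ℝ}

lemma sum_sq_motzkin_update_sub {i : ι} (hi : ∑ j, A i j ^ 2 = 1) (b : ι → ℝ) (x y : κ → ℝ) :
    ∑ j, ((y + (b i - (A *ᵥ y) i) • A i) j - x j) ^ 2 =
      ∑ j, (y j - x j) ^ 2 - (A *ᵥ y - b) i ^ 2 + 2 * (A *ᵥ y - b) i * (A *ᵥ x - b) i := by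
  set r := (A *ᵥ y - b) i
  have hproj : ∑ j, A i j * (y j - x j) = r - (A *ᵥ x - b) i := by
    simp [r, mulVec, dotProduct, mul_sub, sum_sub_distrib]
  calc ∑ j, ((y + (b i - (A *ᵥ y) i) • A i) j - x j) ^ 2
      = ∑ j, ((y j - x j) ^ 2 - 2 * r * (A i j * (y j - x j)) + r ^ 2 * A i j ^ 2) :=
        sum_congr rfl fun j _ => by
          simp only [r, Pi.add_apply, Pi.smul_apply, Pi.sub_apply, smul_eq_mul]
          ring
    _ = _ := by
        rw [sum_add_distrib, sum_sub_distrib, ← mul_sum, ← mul_sum, hproj, hi]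
        ring

lemma sq_mul_sum_sq_sub_le [Fintype ι] {σ : ℝ}
    (hσ : ∀ v : κ → ℝ, σ ^ 2 * ∑ j, v j ^ 2 ≤ ∑ i, (A *ᵥ v) i ^ 2) (b : ι → ℝ) (x y : κ → ℝ) :
    σ ^ 2 * ∑ j, (y j - x j) ^ 2 ≤
      2 * Fintype.card ι * (‖A *ᵥ y - b‖ ^ 2 + ‖A *ᵥ x - b‖ ^ 2) := by
  have hsplit : A *ᵥ (y - x) = (A *ᵥ y - b) - (A *ᵥ x - b) := by
    rw [mulVec_sub]
    abel
  calc σ ^ 2 * ∑ j, (y j - x j) ^ 2 ≤ ∑ i, (A *ᵥ (y - x)) i ^ 2 := hσ (y - x)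
    _ ≤ Fintype.card ι * ‖A *ᵥ (y - x)‖ ^ 2 := sum_sq_le_card_mul_norm_sq _
    _ ≤ Fintype.card ι * (‖A *ᵥ y - b‖ + ‖A *ᵥ x - b‖) ^ 2 := by
        rw [hsplit]
        gcongr
        exact norm_sub_le _ _
    _ ≤ 2 * Fintype.card ι * (‖A *ᵥ y - b‖ ^ 2 + ‖A *ᵥ x - b‖ ^ 2) := by
        nlinarith [sq_nonneg (‖A *ᵥ y - b‖ - ‖A *ᵥ x - b‖), (Fintype.card ι).cast_nonneg (α := ℝ)]

theorem sum_sq_motzkin_step_le [Fintype ι] (hrows : ∀ i, ∑ j, A i j ^ 2 = 1) {σ : ℝ}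
    (hσ : ∀ v : κ → ℝ, σ ^ 2 * ∑ j, v j ^ 2 ≤ ∑ i, (A *ᵥ v) i ^ 2) (b : ι → ℝ) (x y : κ → ℝ)
    {i : ι} (hmax : ∀ j, (A *ᵥ y - b) j ^ 2 ≤ (A *ᵥ y - b) i ^ 2)
    (hres : 4 * ‖A *ᵥ x - b‖ < ‖A *ᵥ y - b‖) :
    ∑ j, ((y + (b i - (A *ᵥ y) i) • A i) j - x j) ^ 2 ≤
      (1 - σ ^ 2 / (4 * Fintype.card ι)) * ∑ j, (y j - x j) ^ 2 + ‖A *ᵥ x - b‖ ^ 2 / 2 := by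
  have hm : (0 : ℝ) < Fintype.card ι := by exact_mod_cast Fintype.card_pos_iff.2 ⟨i⟩
  have hr : ‖A *ᵥ y - b‖ = |(A *ᵥ y - b) i| := norm_eq_abs_of_forall_sq_le hmax
  have hcross : 2 * (A *ᵥ y - b) i * (A *ᵥ x - b) i ≤ (A *ᵥ y - b) i ^ 2 / 2 := by
    refine two_mul_mul_le_sq_div_two_of_four_mul_abs_le ?_
    have he : |(A *ᵥ x - b) i| ≤ ‖A *ᵥ x - b‖ := by
      simpa only [Real.norm_eq_abs] using norm_le_pi_norm (A *ᵥ x - b) i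
    linarith
  have hdecay : σ ^ 2 / (4 * Fintype.card ι) * ∑ j, (y j - x j) ^ 2 ≤
      ((A *ᵥ y - b) i ^ 2 + ‖A *ᵥ x - b‖ ^ 2) / 2 := by
    have hr2 : (A *ᵥ y - b) i ^ 2 = ‖A *ᵥ y - b‖ ^ 2 := by rw [hr, sq_abs]
    rw [div_mul_eq_mul_div, div_le_iff₀ (by positivity), hr2]
    linarith [sq_mul_sum_sq_sub_le hσ b x y]
  rw [sum_sq_motzkin_update_sub (hrows i)]
  linarith

end MotzkinStep

lemma le_pow_mul_add_div_of_le_mul_add {s : ℕ → ℝ} {q c : ℝ} {K : ℕ} (hq0 : 0 ≤ q) (hq1 : q < 1)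
    (hc : 0 ≤ c) (h : ∀ k < K, s (k + 1) ≤ q * s k + c) : s K ≤ q ^ K * s 0 + c / (1 - q) := by
  have h1q : 0 < 1 - q := sub_pos.2 hq1
  suffices ∀ k ≤ K, s k ≤ q ^ k * s 0 + c / (1 - q) from this K le_rfl
  intro k
  induction k with
  | zero => intro _; simp only [pow_zero, one_mul, le_add_iff_nonneg_right]; positivity
  | succ k ih =>
    intro hk
    calc s (k + 1) ≤ q * s k + c := h k hk
      _ ≤ q * (q ^ k * s 0 + c / (1 - q)) + c := by gcongr; exact ih (by omega)
      _ = q ^ (k + 1) * s 0 + c / (1 - q) := by field_simp; ring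

theorem motzkin_exponential_convergence_general
    {m n : ℕ} (A : Matrix (Fin m) (Fin n) ℝ)
    (hrows : ∀ i : Fin m, ∑ j, (A i j) ^ 2 = 1)
    (σ : ℝ) (hσ : 0 < σ)
    (hσmin : ∀ v : Fin n → ℝ, σ ^ 2 * ∑ j, (v j) ^ 2 ≤ ∑ i, (A.mulVec v i) ^ 2)
    (b : Fin m → ℝ) (x : Fin n → ℝ) (e : Fin m → ℝ)
    (he : e = A.mulVec x - b)
    (K : ℕ) (xs : ℕ → Fin n → ℝ)
    (hiter : ∀ k < K, ∃ i : Fin m,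
      (∀ j : Fin m, (A.mulVec (xs k) j - b j) ^ 2 ≤ (A.mulVec (xs k) i - b i) ^ 2) ∧
      xs (k + 1) = xs k + (b i - A.mulVec (xs k) i) • A i)
    (hres : ∀ k < K, 4 * ‖e‖ < ‖A.mulVec (xs k) - b‖) :
    ∑ j, (xs K j - x j) ^ 2 ≤
      (1 - σ ^ 2 / (4 * m)) ^ K * ∑ j, (xs 0 j - x j) ^ 2
        + 2 * m * (σ ^ 2)⁻¹ * ‖e‖ ^ 2 := by
  subst he
  rcases Nat.eq_zero_or_pos n with rfl | hn
  · simp only [univ_eq_empty, sum_empty, mul_zero, zero_add]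
    positivity
  have : Nonempty (Fin n) := ⟨⟨0, hn⟩⟩
  have hσm : σ ^ 2 ≤ m := by simpa using sq_le_card_of_sq_mul_le hrows hσmin
  have hm : (0 : ℝ) < m := (pow_pos hσ 2).trans_le hσm
  have hq0 : 0 ≤ 1 - σ ^ 2 / (4 * m) := by
    rw [sub_nonneg, div_le_one (by positivity)]
    linarith
  have hq1 : 1 - σ ^ 2 / (4 * m) < 1 := sub_lt_self _ (by positivity)
  calc ∑ j, (xs K j - x j) ^ 2
      ≤ (1 - σ ^ 2 / (4 * m)) ^ K * ∑ j, (xs 0 j - x j) ^ 2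
          + ‖A *ᵥ x - b‖ ^ 2 / 2 / (1 - (1 - σ ^ 2 / (4 * m))) := by
        refine le_pow_mul_add_div_of_le_mul_add (s := fun k => ∑ j, (xs k j - x j) ^ 2)
          hq0 hq1 (by positivity) fun k hk => ?_
        obtain ⟨i, hmax, hnext⟩ := hiter k hk
        rw [hnext]
        simpa using sum_sq_motzkin_step_le hrows hσmin b x (xs k) hmax (hres k hk)
    _ = _ := by
        congr 1
        field_simp
        ring

/-- **Exponential convergence rate (inequality (5) of Corollary 1).**
`A` is an `m × n` real matrix (`m ≥ n`) with full column rank `n` and rows of unit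
Euclidean norm; `σ` denotes its smallest singular value, which is positive and
satisfies `σ ‖v‖ ≤ ‖A v‖` for all `v` (stated with squared Euclidean norms).
`b ∈ ℝ^m`, `x ∈ ℝ^n` is fixed, `e = A x - b`, and `‖·‖` on `Fin m → ℝ` is the sup
(max) norm.  `xs 0, xs 1, …, xs K` are Motzkin iterates started at an arbitrary
`xs 0`, and for every `k < K` we have `‖A (xs k) - b‖_∞ > 4 ‖e‖_∞` and
`A (xs k) ≠ A x`.  Then
`‖xs K - x‖² ≤ (1 - σ²/(4 m))^K ‖xs 0 - x‖² + 2 m σ⁻² ‖e‖_∞²`. -/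
theorem motzkin_exponential_convergence
    {m n : ℕ} (hmn : n ≤ m) (A : Matrix (Fin m) (Fin n) ℝ)
    (hrank : A.rank = n)
    (hrows : ∀ i : Fin m, ∑ j, (A i j) ^ 2 = 1)
    (σ : ℝ) (hσ : 0 < σ)
    (hσmin : ∀ v : Fin n → ℝ, σ ^ 2 * ∑ j, (v j) ^ 2 ≤ ∑ i, (A.mulVec v i) ^ 2)
    (b : Fin m → ℝ) (x : Fin n → ℝ) (e : Fin m → ℝ)
    (he : e = A.mulVec x - b)
    (K : ℕ) (xs : ℕ → Fin n → ℝ)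
    (hiter : ∀ k < K, ∃ i : Fin m,
      (∀ j : Fin m, (A.mulVec (xs k) j - b j) ^ 2 ≤ (A.mulVec (xs k) i - b i) ^ 2) ∧
      xs (k + 1) = xs k + (b i - A.mulVec (xs k) i) • A i)
    (hres : ∀ k < K, 4 * ‖e‖ < ‖A.mulVec (xs k) - b‖)
    (hne : ∀ k < K, A.mulVec (xs k) ≠ A.mulVec x) :
    ∑ j, (xs K j - x j) ^ 2 ≤
      (1 - σ ^ 2 / (4 * m)) ^ K * ∑ j, (xs 0 j - x j) ^ 2
        + 2 * m * (σ ^ 2)⁻¹ * ‖e‖ ^ 2 :=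
  motzkin_exponential_convergence_general A hrows σ hσ hσmin b x e he K xs hiter hres
end
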